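/- Let p be prime, m ≥ 1, and x = (x_1,...,x_m) uniform in Z_p^m. Consider any adaptive process producing affine-linear polynomials in Z_p[X_1,...,X_m] and observing which pairs collide at x, where a collision (P_i, P_j) is 'informative' if P_i − P_j is not in the Z_p-span of the differences of previously found nontrivial collisions. Then for any fixed k, the probability that the process finds at least k informative collisions among at most B candidate pairs is at most binom(B, k) / p^k. -/
import Mathlib


/-- Evaluation of an affine-linear polynomial in `m` variables, identified with the vector
of its constant and linear coefficients. -/
def affEval {p m : ℕ} (v : ZMod p × (Fin m → ZMod p)) (x : Fin m → ZMod p) : ZMod p :=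
  v.1 + ∑ i, v.2 i * x i

/-- History of collision outcomes of an adaptive process producing pairs of affine-linear
polynomials in `m` variables and evaluating them at `x`. -/
def runMulti {p m : ℕ}
    (A : List Bool → (ZMod p × (Fin m → ZMod p)) × (ZMod p × (Fin m → ZMod p)))
    (x : Fin m → ZMod p) : ℕ → List Bool
  | 0 => []
  | n + 1 =>
    let h := runMulti A x n
    h ++ [decide (affEval (A h).1 x = affEval (A h).2 x)]

/-- Step `n` of the process is an informative collision at `x`: the pair collides, is
nontrivial, and its difference lies outside the span of the differences of the previously
found nontrivial collisions. -/
def Informative {p m : ℕ}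
    (A : List Bool → (ZMod p × (Fin m → ZMod p)) × (ZMod p × (Fin m → ZMod p)))
    (x : Fin m → ZMod p) (n : ℕ) : Prop :=
  affEval (A (runMulti A x n)).1 x = affEval (A (runMulti A x n)).2 x ∧
  (A (runMulti A x n)).1 - (A (runMulti A x n)).2 ≠ 0 ∧
  (A (runMulti A x n)).1 - (A (runMulti A x n)).2 ∉
    Submodule.span (ZMod p)
      {w : ZMod p × (Fin m → ZMod p) | ∃ j < n,
        w = (A (runMulti A x j)).1 - (A (runMulti A x j)).2 ∧ w ≠ 0 ∧
          affEval (A (runMulti A x j)).1 x = affEval (A (runMulti A x j)).2 x}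

namespace Stmt19
variable {p m : ℕ}

/-- `affEval` as a linear map in the coefficient vector. -/
noncomputable def affLin (x : Fin m → ZMod p) :
    (ZMod p × (Fin m → ZMod p)) →ₗ[ZMod p] ZMod p where
  toFun v := affEval v x
  map_add' u v := by
    simp only [affEval, Prod.fst_add, Prod.snd_add, Pi.add_apply, add_mul,
      Finset.sum_add_distrib]
    ring
  map_smul' c v := by
    simp only [affEval, Prod.smul_fst, Prod.smul_snd, Pi.smul_apply, smul_eq_mul,
      RingHom.id_apply, Finset.mul_sum, mul_assoc, mul_add]

lemma affLin_apply (x : Fin m → ZMod p) (v : ZMod p × (Fin m → ZMod p)) :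
    affLin x v = affEval v x := rfl

lemma affEval_zero_of_mem_span {D : Set (ZMod p × (Fin m → ZMod p))}
    {x : Fin m → ZMod p} (hx : ∀ u ∈ D, affEval u x = 0)
    {v} (hv : v ∈ Submodule.span (ZMod p) D) : affEval v x = 0 := by
  have h : Submodule.span (ZMod p) D ≤ LinearMap.ker (affLin x) :=
    Submodule.span_le.2 fun u hu => by simpa [LinearMap.mem_ker, affLin_apply] using hx u hu
  simpa [LinearMap.mem_ker, affLin_apply] using h hv

lemma collision_iff (x : Fin m → ZMod p) (P Q : ZMod p × (Fin m → ZMod p)) :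
    affEval P x = affEval Q x ↔ affEval (P - Q) x = 0 := by
  rw [← affLin_apply, ← affLin_apply, ← affLin_apply, map_sub, sub_eq_zero]



lemma affEval_add_right (u : ZMod p × (Fin m → ZMod p)) (x y : Fin m → ZMod p) :
    affEval u (x + y) = affEval u x + ∑ i, u.2 i * y i := by
  simp only [affEval, Pi.add_apply, mul_add, Finset.sum_add_distrib]
  ring

lemma exists_direction [Fact p.Prime] {D : Set (ZMod p × (Fin m → ZMod p))}
    {v : ZMod p × (Fin m → ZMod p)} (hv : v ∉ Submodule.span (ZMod p) D)
    {x1 : Fin m → ZMod p} (hx1D : ∀ u ∈ D, affEval u x1 = 0) (hx1v : affEval v x1 = 0) :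
    ∃ d : Fin m → ZMod p,
      (∀ u ∈ Submodule.span (ZMod p) D, ∑ i, u.2 i * d i = 0) ∧ (∑ i, v.2 i * d i = 1) := by
  set U := Submodule.span (ZMod p) D with hU
  set T := U.map (LinearMap.snd (ZMod p) (ZMod p) (Fin m → ZMod p)) with hT
  have hv2 : v.2 ∉ T := by
    rintro ⟨u, hu, hu2⟩
    have hux : affEval u x1 = 0 := affEval_zero_of_mem_span hx1D hu
    have hw2 : (v - u).2 = 0 := by
      have : u.2 = v.2 := hu2
      simp [Prod.snd_sub, this]
    have hwx : affEval (v - u) x1 = 0 := by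
      rw [← affLin_apply, map_sub, affLin_apply, affLin_apply, hx1v, hux, sub_zero]
    have hw1 : (v - u).1 = 0 := by
      have := hwx
      rw [affEval] at this
      simpa [hw2] using this
    have : v = u := by
      have : v - u = 0 := Prod.ext hw1 hw2
      linear_combination (norm := module) this
    exact hv (this ▸ hu)
  obtain ⟨g, hg⟩ : ∃ g : Module.Dual (ZMod p) ((Fin m → ZMod p) ⧸ T),
      g (T.mkQ v.2) ≠ 0 := by
    by_contra h
    push_neg at h
    have : T.mkQ v.2 = 0 := (Module.forall_dual_apply_eq_zero_iff (ZMod p) _).1 h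
    rw [Submodule.mkQ_apply, Submodule.Quotient.mk_eq_zero] at this
    exact hv2 this
  set φ := g.comp T.mkQ with hφ
  have hφT : ∀ t ∈ T, φ t = 0 := by
    intro t ht
    simp [hφ, (Submodule.Quotient.mk_eq_zero T).2 ht]
  have hc : φ v.2 ≠ 0 := hg
  set c := φ v.2 with hcdef
  refine ⟨fun i => c⁻¹ * φ (fun j => if i = j then 1 else 0), ?_, ?_⟩
  · intro u hu
    have hu2 : φ u.2 = 0 := hφT u.2 ⟨u, hu, rfl⟩
    have := LinearMap.pi_apply_eq_sum_univ φ u.2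
    calc ∑ i, u.2 i * (c⁻¹ * φ (fun j => if i = j then 1 else 0))
        = c⁻¹ * ∑ i, u.2 i • φ (fun j => if i = j then 1 else 0) := by
          rw [Finset.mul_sum]; congr 1; ext i; simp [smul_eq_mul]; ring
      _ = c⁻¹ * φ u.2 := by rw [← this]
      _ = 0 := by rw [hu2, mul_zero]
  · have := LinearMap.pi_apply_eq_sum_univ φ v.2
    calc ∑ i, v.2 i * (c⁻¹ * φ (fun j => if i = j then 1 else 0))
        = c⁻¹ * ∑ i, v.2 i • φ (fun j => if i = j then 1 else 0) := by
          rw [Finset.mul_sum]; congr 1; ext i; simp [smul_eq_mul]; ring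
      _ = c⁻¹ * c := by rw [← this]
      _ = 1 := inv_mul_cancel₀ hc

lemma cardW_step [Fact p.Prime] {D : Set (ZMod p × (Fin m → ZMod p))}
    {v : ZMod p × (Fin m → ZMod p)} (hv : v ∉ Submodule.span (ZMod p) D) :
    p * Nat.card {x : Fin m → ZMod p | ∀ u ∈ insert v D, affEval u x = 0}
      ≤ Nat.card {x : Fin m → ZMod p | ∀ u ∈ D, affEval u x = 0} := by
  haveI : NeZero p := ⟨(Fact.out : p.Prime).ne_zero⟩
  set S' := {x : Fin m → ZMod p | ∀ u ∈ insert v D, affEval u x = 0} with hS'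
  rcases Set.eq_empty_or_nonempty S' with hE | ⟨x1, hx1⟩
  · simp [hE]
  · have hx1D : ∀ u ∈ D, affEval u x1 = 0 := fun u hu => hx1 u (Set.mem_insert_of_mem _ hu)
    have hx1v : affEval v x1 = 0 := hx1 v (Set.mem_insert _ _)
    obtain ⟨d, hdU, hdv⟩ := exists_direction hv hx1D hx1v
    have hmem : ∀ (t : ZMod p) (x : Fin m → ZMod p), x ∈ S' →
        (x + t • d) ∈ {x : Fin m → ZMod p | ∀ u ∈ D, affEval u x = 0} := by
      intro t x hx u hu
      rw [affEval_add_right]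
      have h1 : affEval u x = 0 := hx u (Set.mem_insert_of_mem _ hu)
      have h2 : ∑ i, u.2 i * (t • d) i = 0 := by
        have := hdU u (Submodule.subset_span hu)
        calc ∑ i, u.2 i * (t • d) i = t * ∑ i, u.2 i * d i := by
              rw [Finset.mul_sum]; congr 1; ext i; simp [smul_eq_mul]; ring
          _ = 0 := by rw [this, mul_zero]
      rw [h1, h2, add_zero]
    have haffv : ∀ (t : ZMod p) (x : Fin m → ZMod p), x ∈ S' →
        affEval v (x + t • d) = t := by
      intro t x hx
      rw [affEval_add_right, hx v (Set.mem_insert _ _), zero_add]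
      calc ∑ i, v.2 i * (t • d) i = t * ∑ i, v.2 i * d i := by
            rw [Finset.mul_sum]; congr 1; ext i; simp [smul_eq_mul]; ring
        _ = t := by rw [hdv, mul_one]
    have hinj : Function.Injective
        (fun q : ZMod p × S' => (⟨(q.2 : Fin m → ZMod p) + q.1 • d, hmem q.1 q.2 q.2.2⟩ :
          {x : Fin m → ZMod p | ∀ u ∈ D, affEval u x = 0})) := by
      rintro ⟨t, x, hx⟩ ⟨s, y, hy⟩ h
      simp only [Subtype.mk_eq_mk] at h
      have ht : t = s := by
        have h1 := haffv t x hx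
        have h2 := haffv s y hy
        rw [← h1, ← h2, h]
      subst ht
      have hxy : x = y := add_right_cancel h
      simp [hxy]
    calc p * Nat.card S' = Nat.card (ZMod p × S') := by
          rw [Nat.card_prod, Nat.card_zmod]
      _ ≤ Nat.card {x : Fin m → ZMod p | ∀ u ∈ D, affEval u x = 0} :=
          Nat.card_le_card_of_injective _ hinj



open Classical in
/-- Recursive count of informative collisions, carrying the set `D` of previously found
collision differences. -/
noncomputable def infCount :
    (List Bool → (ZMod p × (Fin m → ZMod p)) × (ZMod p × (Fin m → ZMod p))) →
    Set (ZMod p × (Fin m → ZMod p)) → (Fin m → ZMod p) → ℕ → ℕ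
  | _, _, _, 0 => 0
  | A, D, x, n + 1 =>
    if affEval (A []).1 x = affEval (A []).2 x then
      (if (A []).1 - (A []).2 ∈ Submodule.span (ZMod p) D then 0 else 1) +
        infCount (fun h => A (true :: h)) (insert ((A []).1 - (A []).2) D) x n
    else infCount (fun h => A (false :: h)) D x n

lemma infCount_zero (A) (D : Set (ZMod p × (Fin m → ZMod p))) (x) :
    infCount A D x 0 = 0 := rfl

open Classical in
lemma infCount_succ (A) (D : Set (ZMod p × (Fin m → ZMod p))) (x) (n : ℕ) :
    infCount A D x (n + 1) =
      if affEval (A []).1 x = affEval (A []).2 x then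
        (if (A []).1 - (A []).2 ∈ Submodule.span (ZMod p) D then 0 else 1) +
          infCount (fun h => A (true :: h)) (insert ((A []).1 - (A []).2) D) x n
      else infCount (fun h => A (false :: h)) D x n := by
  simp [infCount]

section
variable (A : List Bool → (ZMod p × (Fin m → ZMod p)) × (ZMod p × (Fin m → ZMod p)))
  (x : Fin m → ZMod p)

lemma runMulti_succ (n : ℕ) :
    runMulti A x (n+1) = runMulti A x n ++
      [decide (affEval (A (runMulti A x n)).1 x = affEval (A (runMulti A x n)).2 x)] := rfl

lemma runMulti_shift (n : ℕ) :
    runMulti A x (n+1) =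
      decide (affEval (A []).1 x = affEval (A []).2 x) ::
        runMulti (fun h => A (decide (affEval (A []).1 x = affEval (A []).2 x) :: h)) x n := by
  induction n with
  | zero => rfl
  | succ n ih =>
      rw [runMulti_succ, ih, runMulti_succ]
      simp

lemma A_runMulti_shift (n : ℕ) :
    A (runMulti A x (n+1)) =
      (fun h => A (decide (affEval (A []).1 x = affEval (A []).2 x) :: h))
        (runMulti (fun h => A (decide (affEval (A []).1 x = affEval (A []).2 x) :: h)) x n) := by
  rw [runMulti_shift]

/-- Differences of the nontrivial collisions before step `n`. -/
def priorSet (n : ℕ) : Set (ZMod p × (Fin m → ZMod p)) :=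
  {w | ∃ j < n, w = (A (runMulti A x j)).1 - (A (runMulti A x j)).2 ∧
      affEval (A (runMulti A x j)).1 x = affEval (A (runMulti A x j)).2 x}

/-- Informativeness relative to an initial difference set `D`. -/
def InformativeD (D : Set (ZMod p × (Fin m → ZMod p))) (n : ℕ) : Prop :=
  affEval (A (runMulti A x n)).1 x = affEval (A (runMulti A x n)).2 x ∧
  (A (runMulti A x n)).1 - (A (runMulti A x n)).2 ∉
    Submodule.span (ZMod p) (D ∪ priorSet A x n)

lemma priorSet_zero : priorSet A x 0 = ∅ := by
  ext w; simp [priorSet]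

lemma informative_iff (n : ℕ) :
    Informative A x n ↔ InformativeD A x ∅ n := by
  have hspan : Submodule.span (ZMod p)
      {w : ZMod p × (Fin m → ZMod p) | ∃ j < n,
        w = (A (runMulti A x j)).1 - (A (runMulti A x j)).2 ∧ w ≠ 0 ∧
          affEval (A (runMulti A x j)).1 x = affEval (A (runMulti A x j)).2 x}
      = Submodule.span (ZMod p) ((∅ : Set _) ∪ priorSet A x n) := by
    apply le_antisymm
    · apply Submodule.span_le.2
      rintro w ⟨j, hj, hw, _, hc⟩
      exact Submodule.subset_span (Or.inr ⟨j, hj, hw, hc⟩)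
    · apply Submodule.span_le.2
      rintro w (h | ⟨j, hj, hw, hc⟩)
      · exact absurd h (Set.notMem_empty w)
      · by_cases h0 : w = 0
        · simp [h0]
        · exact Submodule.subset_span ⟨j, hj, hw, h0, hc⟩
  constructor
  · rintro ⟨h1, h2, h3⟩
    exact ⟨h1, by rw [← hspan]; exact h3⟩
  · rintro ⟨h1, h3⟩
    rw [← hspan] at h3
    refine ⟨h1, fun h0 => h3 ?_, h3⟩
    rw [h0]; exact Submodule.zero_mem _
end


section
variable (A : List Bool → (ZMod p × (Fin m → ZMod p)) × (ZMod p × (Fin m → ZMod p)))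
  (x : Fin m → ZMod p)

lemma InformativeD_succ_pos (hc : affEval (A []).1 x = affEval (A []).2 x)
    (n : ℕ) (D : Set (ZMod p × (Fin m → ZMod p))) :
    InformativeD A x D (n+1) ↔
      InformativeD (fun h => A (true :: h)) x (insert ((A []).1 - (A []).2) D) n := by
  have hb : decide (affEval (A []).1 x = affEval (A []).2 x) = true := decide_eq_true hc
  have hA : ∀ j, A (runMulti A x (j+1)) =
      A (true :: runMulti (fun h => A (true :: h)) x j) := by
    intro j
    have := A_runMulti_shift A x j
    rw [hb] at this
    exact this
  have hset : D ∪ priorSet A x (n+1) =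
      insert ((A []).1 - (A []).2) D ∪ priorSet (fun h => A (true :: h)) x n := by
    ext w
    simp only [Set.mem_union, priorSet, Set.mem_setOf_eq, Set.mem_insert_iff]
    constructor
    · rintro (hD | ⟨j, hj, hw, hcj⟩)
      · exact Or.inl (Or.inr hD)
      · cases j with
        | zero => exact Or.inl (Or.inl hw)
        | succ j =>
            refine Or.inr ⟨j, by omega, ?_, ?_⟩
            · rw [← hA j]; exact hw
            · rw [← hA j]; exact hcj
    · rintro ((hw | hD) | ⟨j, hj, hw, hcj⟩)
      · exact Or.inr ⟨0, n.succ_pos, hw, hc⟩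
      · exact Or.inl hD
      · refine Or.inr ⟨j+1, by omega, ?_, ?_⟩
        · rw [hA j]; exact hw
        · rw [hA j]; exact hcj
  unfold InformativeD
  rw [hA n, hset]

lemma InformativeD_succ_neg (hc : ¬ (affEval (A []).1 x = affEval (A []).2 x))
    (n : ℕ) (D : Set (ZMod p × (Fin m → ZMod p))) :
    InformativeD A x D (n+1) ↔
      InformativeD (fun h => A (false :: h)) x D n := by
  have hb : decide (affEval (A []).1 x = affEval (A []).2 x) = false := decide_eq_false hc
  have hA : ∀ j, A (runMulti A x (j+1)) =
      A (false :: runMulti (fun h => A (false :: h)) x j) := by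
    intro j
    have := A_runMulti_shift A x j
    rw [hb] at this
    exact this
  have hset : D ∪ priorSet A x (n+1) =
      D ∪ priorSet (fun h => A (false :: h)) x n := by
    ext w
    simp only [Set.mem_union, priorSet, Set.mem_setOf_eq]
    constructor
    · rintro (hD | ⟨j, hj, hw, hcj⟩)
      · exact Or.inl hD
      · cases j with
        | zero => exact absurd hcj hc
        | succ j =>
            refine Or.inr ⟨j, by omega, ?_, ?_⟩
            · rw [← hA j]; exact hw
            · rw [← hA j]; exact hcj
    · rintro (hD | ⟨j, hj, hw, hcj⟩)
      · exact Or.inl hD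
      · refine Or.inr ⟨j+1, by omega, ?_, ?_⟩
        · rw [hA j]; exact hw
        · rw [hA j]; exact hcj
  unfold InformativeD
  rw [hA n, hset]

lemma InformativeD_zero (D : Set (ZMod p × (Fin m → ZMod p))) :
    InformativeD A x D 0 ↔
      (affEval (A []).1 x = affEval (A []).2 x ∧
        (A []).1 - (A []).2 ∉ Submodule.span (ZMod p) D) := by
  unfold InformativeD
  rw [priorSet_zero, Set.union_empty]
  exact Iff.rfl

end

open Classical in
lemma card_subtype_eq_sum (n : ℕ) (P : ℕ → Prop) :
    Nat.card {i : Fin n // P (i : ℕ)} = ∑ i : Fin n, if P (i : ℕ) then 1 else 0 := by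
  rw [Nat.card_eq_fintype_card, Fintype.card_subtype, Finset.card_filter]

lemma card_informativeD (x : Fin m → ZMod p) :
    ∀ (n : ℕ) (A : List Bool → (ZMod p × (Fin m → ZMod p)) × (ZMod p × (Fin m → ZMod p)))
      (D : Set (ZMod p × (Fin m → ZMod p))),
      Nat.card {i : Fin n // InformativeD A x D (i : ℕ)} = infCount A D x n := by
  intro n
  induction n with
  | zero =>
      intro A D
      rw [infCount_zero]
      haveI : IsEmpty {i : Fin 0 // InformativeD A x D (i : ℕ)} := ⟨fun i => i.1.elim0⟩
      exact Nat.card_of_isEmpty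
  | succ n ih =>
      intro A D
      classical
      rw [card_subtype_eq_sum, Fin.sum_univ_succ, infCount_succ]
      by_cases hc : affEval (A []).1 x = affEval (A []).2 x
      · rw [if_pos hc]
        have h0 : (if InformativeD A x D ((0 : Fin (n+1)) : ℕ) then 1 else 0)
            = (if (A []).1 - (A []).2 ∈ Submodule.span (ZMod p) D then 0 else 1) := by
          have hiff : InformativeD A x D ((0 : Fin (n+1)) : ℕ) ↔
              (A []).1 - (A []).2 ∉ Submodule.span (ZMod p) D := by
            simp only [Fin.val_zero]
            rw [InformativeD_zero]
            exact ⟨fun h => h.2, fun h => ⟨hc, h⟩⟩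
          rw [if_congr hiff rfl rfl]
          by_cases h : (A []).1 - (A []).2 ∈ Submodule.span (ZMod p) D
          · simp [h]
          · simp [h]
        have hsum : (∑ i : Fin n, if InformativeD A x D ((i.succ : Fin (n+1)) : ℕ) then 1 else 0)
            = ∑ i : Fin n, if InformativeD (fun h => A (true :: h)) x
                (insert ((A []).1 - (A []).2) D) (i : ℕ) then 1 else 0 := by
          refine Finset.sum_congr rfl fun i _ => ?_
          refine if_congr ?_ rfl rfl
          rw [Fin.val_succ]
          exact InformativeD_succ_pos A x hc (i : ℕ) D
        rw [h0, hsum, ← card_subtype_eq_sum, ih]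
      · rw [if_neg hc]
        have h0 : (if InformativeD A x D ((0 : Fin (n+1)) : ℕ) then 1 else 0) = 0 := by
          rw [if_neg]
          simp only [Fin.val_zero]
          rw [InformativeD_zero]
          exact fun h => hc h.1
        have hsum : (∑ i : Fin n, if InformativeD A x D ((i.succ : Fin (n+1)) : ℕ) then 1 else 0)
            = ∑ i : Fin n, if InformativeD (fun h => A (false :: h)) x D (i : ℕ) then 1 else 0 := by
          refine Finset.sum_congr rfl fun i _ => ?_
          refine if_congr ?_ rfl rfl
          rw [Fin.val_succ]
          exact InformativeD_succ_neg A x hc (i : ℕ) D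
        rw [h0, hsum, ← card_subtype_eq_sum, ih, zero_add]



lemma core [Fact p.Prime] :
    ∀ (n : ℕ) (A : List Bool → (ZMod p × (Fin m → ZMod p)) × (ZMod p × (Fin m → ZMod p)))
      (D : Set (ZMod p × (Fin m → ZMod p))) (k : ℕ),
      p ^ k * Nat.card {x : Fin m → ZMod p |
          (∀ u ∈ D, affEval u x = 0) ∧ k ≤ infCount A D x n}
        ≤ n.choose k * Nat.card {x : Fin m → ZMod p | ∀ u ∈ D, affEval u x = 0} := by
  haveI : NeZero p := ⟨(Fact.out : p.Prime).ne_zero⟩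
  intro n
  induction n with
  | zero =>
      intro A D k
      match k with
      | 0 =>
          simp only [pow_zero, one_mul, Nat.choose_self]
          rw [Nat.card_coe_set_eq, Nat.card_coe_set_eq]
          exact Set.ncard_le_ncard (fun x hx => hx.1) (Set.toFinite _)
      | k+1 =>
          have hempty : {x : Fin m → ZMod p |
              (∀ u ∈ D, affEval u x = 0) ∧ k+1 ≤ infCount A D x 0} = ∅ := by
            ext x; simp [infCount_zero]
          rw [hempty]
          simp
  | succ n ih =>
      intro A D k
      set v := (A []).1 - (A []).2 with hv
      by_cases hm : v ∈ Submodule.span (ZMod p) D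
      · -- trivial collision: the span does not change
        have hWeq : {x : Fin m → ZMod p | ∀ u ∈ insert v D, affEval u x = 0}
            = {x : Fin m → ZMod p | ∀ u ∈ D, affEval u x = 0} := by
          ext x
          simp only [Set.mem_setOf_eq]
          constructor
          · exact fun h u hu => h u (Set.mem_insert_of_mem _ hu)
          · intro h u hu
            rcases hu with rfl | hu
            · exact affEval_zero_of_mem_span h hm
            · exact h u hu
        have hSeq : {x : Fin m → ZMod p |
              (∀ u ∈ D, affEval u x = 0) ∧ k ≤ infCount A D x (n+1)}
            = {x : Fin m → ZMod p | (∀ u ∈ insert v D, affEval u x = 0) ∧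
                k ≤ infCount (fun h => A (true :: h)) (insert v D) x n} := by
          ext x
          simp only [Set.mem_setOf_eq]
          constructor
          · rintro ⟨hW, hk⟩
            have hcoll : affEval (A []).1 x = affEval (A []).2 x :=
              (collision_iff x _ _).2 (affEval_zero_of_mem_span hW hm)
            rw [infCount_succ, if_pos hcoll, if_pos hm, zero_add, ← hv] at hk
            refine ⟨?_, hk⟩
            show x ∈ {x : Fin m → ZMod p | ∀ u ∈ insert v D, affEval u x = 0}
            rw [hWeq]
            exact hW
          · rintro ⟨hW', hk⟩
            have hW : ∀ u ∈ D, affEval u x = 0 := by rw [← hWeq] at *; exact fun u hu => hW' u (Set.mem_insert_of_mem _ hu)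
            have hcoll : affEval (A []).1 x = affEval (A []).2 x :=
              (collision_iff x _ _).2 (hW' v (Set.mem_insert _ _))
            rw [infCount_succ, if_pos hcoll, if_pos hm, zero_add, ← hv]
            exact ⟨hW, hk⟩
        rw [hSeq]
        calc p ^ k * Nat.card {x : Fin m → ZMod p | (∀ u ∈ insert v D, affEval u x = 0) ∧
                k ≤ infCount (fun h => A (true :: h)) (insert v D) x n}
            ≤ n.choose k *
              Nat.card {x : Fin m → ZMod p | ∀ u ∈ insert v D, affEval u x = 0} :=
              ih (fun h => A (true :: h)) (insert v D) k
          _ = n.choose k * Nat.card {x : Fin m → ZMod p | ∀ u ∈ D, affEval u x = 0} := by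
              rw [hWeq]
          _ ≤ (n+1).choose k * Nat.card {x : Fin m → ZMod p | ∀ u ∈ D, affEval u x = 0} :=
              Nat.mul_le_mul_right _ (Nat.choose_le_choose k (Nat.le_succ n))
      · match k with
        | 0 =>
            simp only [pow_zero, one_mul, Nat.choose_zero_right]
            rw [Nat.card_coe_set_eq, Nat.card_coe_set_eq]
            exact Set.ncard_le_ncard (fun x hx => hx.1) (Set.toFinite _)
        | k+1 =>
            set W := {x : Fin m → ZMod p | ∀ u ∈ D, affEval u x = 0} with hW
            set W' := {x : Fin m → ZMod p | ∀ u ∈ insert v D, affEval u x = 0} with hW'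
            set St := {x : Fin m → ZMod p | (∀ u ∈ insert v D, affEval u x = 0) ∧
                k ≤ infCount (fun h => A (true :: h)) (insert v D) x n} with hSt
            set Sf := {x : Fin m → ZMod p | (∀ u ∈ D, affEval u x = 0) ∧
                k+1 ≤ infCount (fun h => A (false :: h)) D x n} with hSf
            have hsub : {x : Fin m → ZMod p |
                (∀ u ∈ D, affEval u x = 0) ∧ k+1 ≤ infCount A D x (n+1)} ⊆ St ∪ Sf := by
              rintro x ⟨hWx, hk⟩
              by_cases hcoll : affEval (A []).1 x = affEval (A []).2 x
              · left
                rw [infCount_succ, if_pos hcoll, if_neg hm, ← hv] at hk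
                refine ⟨?_, by omega⟩
                intro u hu
                rcases hu with rfl | hu
                · exact (collision_iff x _ _).1 hcoll
                · exact hWx u hu
              · right
                rw [infCount_succ, if_neg hcoll] at hk
                exact ⟨hWx, hk⟩
            have hcard : Nat.card {x : Fin m → ZMod p |
                (∀ u ∈ D, affEval u x = 0) ∧ k+1 ≤ infCount A D x (n+1)}
                ≤ Nat.card St + Nat.card Sf := by
              rw [Nat.card_coe_set_eq, Nat.card_coe_set_eq, Nat.card_coe_set_eq]
              calc _ ≤ (St ∪ Sf).ncard := Set.ncard_le_ncard hsub (Set.toFinite _)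
                _ ≤ St.ncard + Sf.ncard := Set.ncard_union_le _ _
            have ht : p ^ k * Nat.card St ≤ n.choose k * Nat.card W' :=
              ih (fun h => A (true :: h)) (insert v D) k
            have hf : p ^ (k+1) * Nat.card Sf ≤ n.choose (k+1) * Nat.card W :=
              ih (fun h => A (false :: h)) D (k+1)
            have hstep : p * Nat.card W' ≤ Nat.card W := cardW_step hm
            calc p ^ (k+1) * Nat.card {x : Fin m → ZMod p |
                  (∀ u ∈ D, affEval u x = 0) ∧ k+1 ≤ infCount A D x (n+1)}
                ≤ p ^ (k+1) * (Nat.card St + Nat.card Sf) :=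
                  Nat.mul_le_mul_left _ hcard
              _ = p * (p ^ k * Nat.card St) + p ^ (k+1) * Nat.card Sf := by ring
              _ ≤ p * (n.choose k * Nat.card W') + n.choose (k+1) * Nat.card W :=
                  Nat.add_le_add (Nat.mul_le_mul_left _ ht) hf
              _ = n.choose k * (p * Nat.card W') + n.choose (k+1) * Nat.card W := by ring
              _ ≤ n.choose k * Nat.card W + n.choose (k+1) * Nat.card W :=
                  Nat.add_le_add_right (Nat.mul_le_mul_left _ hstep) _
              _ = (n+1).choose (k+1) * Nat.card W := by
                  rw [Nat.choose_succ_succ']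
                  ring

end Stmt19

/-- m-MDL core bound: an adaptive process producing at most `B` candidate pairs of
affine-linear polynomials in `m` variables finds at least `k` informative collisions at a
uniform `x ∈ (ZMod p)^m` with probability at most `choose(B, k)/p^k`. -/
theorem stmt19 {p m : ℕ} [Fact (Nat.Prime p)] (hm : 1 ≤ m) (B k : ℕ)
    (A : List Bool → (ZMod p × (Fin m → ZMod p)) × (ZMod p × (Fin m → ZMod p))) :
    ((Nat.card {x : Fin m → ZMod p |
        k ≤ Nat.card {n : Fin B // Informative A x (n : ℕ)}}) : ℝ) / (p : ℝ) ^ m ≤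
      (Nat.choose B k : ℝ) / (p : ℝ) ^ k := by
  haveI : NeZero p := ⟨(Fact.out : p.Prime).ne_zero⟩
  have hp : 0 < p := (Fact.out : p.Prime).pos
  have hset : {x : Fin m → ZMod p | k ≤ Nat.card {n : Fin B // Informative A x (n : ℕ)}}
      = {x : Fin m → ZMod p |
          (∀ u ∈ (∅ : Set (ZMod p × (Fin m → ZMod p))), affEval u x = 0) ∧
            k ≤ Stmt19.infCount A ∅ x B} := by
    ext x
    simp only [Set.mem_setOf_eq, Set.mem_empty_iff_false, false_implies, implies_true, true_and]
    have h1 : Nat.card {n : Fin B // Informative A x (n : ℕ)}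
        = Nat.card {n : Fin B // Stmt19.InformativeD A x ∅ (n : ℕ)} :=
      Nat.card_congr (Equiv.subtypeEquivRight fun n => Stmt19.informative_iff A x (n : ℕ))
    rw [h1, Stmt19.card_informativeD]
  have hcardW : Nat.card {x : Fin m → ZMod p |
      ∀ u ∈ (∅ : Set (ZMod p × (Fin m → ZMod p))), affEval u x = 0} = p ^ m := by
    have huniv : {x : Fin m → ZMod p |
        ∀ u ∈ (∅ : Set (ZMod p × (Fin m → ZMod p))), affEval u x = 0} = Set.univ := by
      ext x; simp
    rw [huniv, Nat.card_coe_set_eq, Set.ncard_univ, Nat.card_eq_fintype_card]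
    simp [ZMod.card]
  have key := Stmt19.core (p := p) (m := m) B A ∅ k
  rw [hcardW] at key
  rw [← hset] at key
  rw [div_le_div_iff₀ (by positivity) (by positivity)]
  have key' : ((p ^ k * Nat.card {x : Fin m → ZMod p |
      k ≤ Nat.card {n : Fin B // Informative A x (n : ℕ)}} : ℕ) : ℝ)
      ≤ ((B.choose k * p ^ m : ℕ) : ℝ) := Nat.cast_le.2 key
  push_cast at key'
  linarith
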